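/- arXiv:1406.0934 — 3 statements merged into one kernel-verified Lean document; each statement's English description precedes it below -/
import Mathlib

section
/- Let F be a finite-dimensional real inner product space, G a finite-dimensional real vector space, and A : F → G a surjective linear map. Equip G with the push-forward inner product ⟨·,·⟩_G, i.e. the bilinear form (g₁, g₂) ↦ ((A ∘ ♯ ∘ A*)⁻¹(g₁))(g₂) where ♯ : F* → F is the inverse of f ↦ ⟨f, ·⟩_F and A* is the dual map of A. Then the restriction of A to the orthogonal complement (ker A)^⊥ of the kernel of A is a linear isometry onto G: for all f₁, f₂ ∈ (ker A)^⊥, ⟨A f₁, A f₂⟩_G = ⟨f₁, f₂⟩_F. -/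
open Module

/-! The defining property of `♯` gives `⟪♯ (A* η), v⟫ = η (A v)`. Applied to `v = ♯ (A* η)` this shows
that `η ↦ A (♯ (A* η))` is injective, hence bijective by a dimension count. If `A (♯ (A* η)) = A f₁`,
then `♯ (A* η) - f₁ ∈ ker A` is orthogonal to every `f₂ ∈ (ker A)ᗮ`, so
`η (A f₂) = ⟪♯ (A* η), f₂⟫ = ⟪f₁, f₂⟫`. -/

section Sharp

variable {F G : Type*} [NormedAddCommGroup F] [InnerProductSpace ℝ F] [AddCommGroup G]
  [Module ℝ G] {sharp : Dual ℝ F →ₗ[ℝ] F}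

lemma eq_zero_of_sharp_eq_zero (hsharp : ∀ (φ : Dual ℝ F) (v : F), φ v = inner ℝ (sharp φ) v)
    {φ : Dual ℝ F} (hφ : sharp φ = 0) : φ = 0 := by
  ext v
  simp [hsharp, hφ]

lemma inner_sharp_dualMap (hsharp : ∀ (φ : Dual ℝ F) (v : F), φ v = inner ℝ (sharp φ) v)
    (A : F →ₗ[ℝ] G) (η : Dual ℝ G) (v : F) :
    inner ℝ (sharp (A.dualMap η)) v = η (A v) :=
  (hsharp (A.dualMap η) v).symm

lemma injective_comp_sharp_comp_dualMap
    (hsharp : ∀ (φ : Dual ℝ F) (v : F), φ v = inner ℝ (sharp φ) v)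
    {A : F →ₗ[ℝ] G} (hA : Function.Surjective A) :
    Function.Injective (A ∘ₗ sharp ∘ₗ A.dualMap) := by
  rw [← LinearMap.ker_eq_bot, LinearMap.ker_eq_bot']
  intro η hη
  have hnorm : inner ℝ (sharp (A.dualMap η)) (sharp (A.dualMap η)) = (0 : ℝ) := by
    rw [inner_sharp_dualMap hsharp]
    exact (congrArg η hη).trans η.map_zero
  have hdual : A.dualMap η = 0 :=
    eq_zero_of_sharp_eq_zero hsharp (inner_self_eq_zero.mp hnorm)
  exact A.dualMap_injective_of_surjective hA (hdual.trans A.dualMap.map_zero.symm)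

lemma bijective_comp_sharp_comp_dualMap [FiniteDimensional ℝ G]
    (hsharp : ∀ (φ : Dual ℝ F) (v : F), φ v = inner ℝ (sharp φ) v)
    {A : F →ₗ[ℝ] G} (hA : Function.Surjective A) :
    Function.Bijective (A ∘ₗ sharp ∘ₗ A.dualMap) :=
  have hinj := injective_comp_sharp_comp_dualMap hsharp hA
  ⟨hinj, (LinearMap.injective_iff_surjective_of_finrank_eq_finrank
    Subspace.dual_finrank_eq).mp hinj⟩

lemma apply_eq_inner_of_comp_sharp_comp_dualMap_eq
    (hsharp : ∀ (φ : Dual ℝ F) (v : F), φ v = inner ℝ (sharp φ) v)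
    {A : F →ₗ[ℝ] G} {f₁ f₂ : F} (hf₂ : f₂ ∈ (LinearMap.ker A)ᗮ) {η : Dual ℝ G}
    (hη : (A ∘ₗ sharp ∘ₗ A.dualMap) η = A f₁) :
    η (A f₂) = inner ℝ f₁ f₂ := by
  have hker : sharp (A.dualMap η) - f₁ ∈ LinearMap.ker A := by
    rw [LinearMap.mem_ker, map_sub, sub_eq_zero]
    exact hη
  have horth : inner ℝ (sharp (A.dualMap η) - f₁) f₂ = (0 : ℝ) :=
    (Submodule.mem_orthogonal _ f₂).mp hf₂ _ hker
  rw [inner_sub_left, sub_eq_zero, inner_sharp_dualMap hsharp] at horth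
  exact horth

end Sharp

theorem stmt2_general {F G : Type*} [NormedAddCommGroup F] [InnerProductSpace ℝ F]
    [AddCommGroup G] [Module ℝ G] [FiniteDimensional ℝ G]
    (A : F →ₗ[ℝ] G) (hA : Function.Surjective A)
    (sharp : Module.Dual ℝ F →ₗ[ℝ] F)
    (hsharp : ∀ (φ : Module.Dual ℝ F) (v : F), φ v = (inner ℝ (sharp φ) v : ℝ)) :
    Function.Bijective (A ∘ₗ sharp ∘ₗ A.dualMap) ∧
    ∀ f₁ ∈ (LinearMap.ker A)ᗮ, ∀ f₂ ∈ (LinearMap.ker A)ᗮ,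
      ∀ η : Module.Dual ℝ G, (A ∘ₗ sharp ∘ₗ A.dualMap) η = A f₁ →
        η (A f₂) = (inner ℝ f₁ f₂ : ℝ) :=
  ⟨bijective_comp_sharp_comp_dualMap hsharp hA,
    fun _ _ _ hf₂ _ hη => apply_eq_inner_of_comp_sharp_comp_dualMap_eq hsharp hf₂ hη⟩

/-- The restriction of a surjective linear map `A` to `(ker A)ᗮ` is a linear isometry
onto `G`, when `G` is equipped with the push-forward inner product
`(g₁, g₂) ↦ ((A ∘ ♯ ∘ A*)⁻¹ g₁) g₂`. -/
theorem stmt2 {F G : Type*} [NormedAddCommGroup F] [InnerProductSpace ℝ F]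
    [FiniteDimensional ℝ F] [AddCommGroup G] [Module ℝ G] [FiniteDimensional ℝ G]
    (A : F →ₗ[ℝ] G) (hA : Function.Surjective A)
    (sharp : Module.Dual ℝ F →ₗ[ℝ] F)
    (hsharp : ∀ (φ : Module.Dual ℝ F) (v : F), φ v = (inner ℝ (sharp φ) v : ℝ)) :
    Function.Bijective (A ∘ₗ sharp ∘ₗ A.dualMap) ∧
    ∀ f₁ ∈ (LinearMap.ker A)ᗮ, ∀ f₂ ∈ (LinearMap.ker A)ᗮ,
      ∀ η : Module.Dual ℝ G, (A ∘ₗ sharp ∘ₗ A.dualMap) η = A f₁ →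
        η (A f₂) = (inner ℝ f₁ f₂ : ℝ) :=
  stmt2_general A hA sharp hsharp
end

section
/- Let n ≥ 1 and l ∈ ℕ. Let μ be a finite Borel measure on ℝ^n with μ(ℝ^n) > 0 and with compact support, which is invariant under the map ξ ↦ −ξ, and such that for every nonzero real polynomial q in n variables of total degree at most l one has μ({ξ ∈ ℝ^n : q(ξ) ≠ 0}) > 0 (i.e. the support of μ is not contained in any algebraic hypersurface of degree l). For real polynomials q₁, q₂ in n variables of total degree at most l, define κ(q₁, q₂) = (1/μ(ℝ^n)) ∫_{ℝ^n} q₁(iξ) · conj(q₂(iξ)) dμ(ξ) ∈ ℂ, where q(iξ) denotes the evaluation in ℂ of q at the point (iξ₁, …, iξ_n) with i the imaginary unit. Then κ takes only real values and defines an inner product (a symmetric positive-definite real bilinear form) on the real vector space of polynomials in n variables of total degree at most l. -/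
/-!
Since `q` has real coefficients, `conj (q(iξ)) = q(-iξ)`; the symmetry of `μ` therefore turns the
integrand of `κ(q₁, q₂)` at `-ξ` into the integrand of `κ(q₂, q₁)` at `ξ`, which is its complex
conjugate, so `κ` is real and symmetric. For positivity, `κ(q, q)` is the mean of
`|q(iξ)|² = A(ξ)² + B(ξ)²`, where `q(iξ) = A(ξ) + i B(ξ)` splits into real polynomials of degree at
most `deg q`, not both zero, and by the nondegeneracy of `μ` a nonzero one does not vanish
`μ`-almost everywhere.
-/

open MeasureTheory MvPolynomial ComplexConjugate

namespace MvPolynomial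

variable {σ : Type*}

noncomputable def rePart (Q : MvPolynomial σ ℂ) : MvPolynomial σ ℝ :=
  AddMonoidAlgebra.map Complex.reAddGroupHom Q

noncomputable def imPart (Q : MvPolynomial σ ℂ) : MvPolynomial σ ℝ :=
  AddMonoidAlgebra.map Complex.imAddGroupHom Q

@[simp]
theorem coeff_rePart (Q : MvPolynomial σ ℂ) (m : σ →₀ ℕ) :
    coeff m Q.rePart = (coeff m Q).re :=
  rfl

@[simp]
theorem coeff_imPart (Q : MvPolynomial σ ℂ) (m : σ →₀ ℕ) :
    coeff m Q.imPart = (coeff m Q).im :=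
  rfl

theorem map_rePart_add_C_I_mul_map_imPart (Q : MvPolynomial σ ℂ) :
    map Complex.ofRealHom Q.rePart + C Complex.I * map Complex.ofRealHom Q.imPart = Q := by
  ext m
  simp [coeff_map, mul_comm Complex.I, Complex.re_add_im]

theorem eval_ofReal (Q : MvPolynomial σ ℂ) (x : σ → ℝ) :
    eval (fun i => (x i : ℂ)) Q = eval x Q.rePart + eval x Q.imPart * Complex.I := by
  have h (p : MvPolynomial σ ℝ) :
      eval (fun i => (x i : ℂ)) (map Complex.ofRealHom p) = eval x p :=
    (eval_map _ _ _).trans (aeval_algebraMap_apply ℂ x p)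
  conv_lhs => rw [← map_rePart_add_C_I_mul_map_imPart Q]
  rw [eval_add, eval_mul, eval_C, h, h, mul_comm]

theorem rePart_ne_zero_or_imPart_ne_zero {Q : MvPolynomial σ ℂ} (hQ : Q ≠ 0) :
    Q.rePart ≠ 0 ∨ Q.imPart ≠ 0 := by
  contrapose! hQ
  rw [← map_rePart_add_C_I_mul_map_imPart Q, hQ.1, hQ.2]
  simp

theorem totalDegree_rePart_le (Q : MvPolynomial σ ℂ) : Q.rePart.totalDegree ≤ Q.totalDegree :=
  Finset.sup_mono fun m hm => by
    rw [mem_support_iff] at hm ⊢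
    exact fun h => hm (by simp [h])

theorem totalDegree_imPart_le (Q : MvPolynomial σ ℂ) : Q.imPart.totalDegree ≤ Q.totalDegree :=
  Finset.sup_mono fun m hm => by
    rw [mem_support_iff] at hm ⊢
    exact fun h => hm (by simp [h])

variable {R A : Type*}

section scaleVars

variable [CommSemiring R] [CommSemiring A] [Algebra R A]

noncomputable def scaleVars (c : A) (q : MvPolynomial σ R) : MvPolynomial σ A :=
  ∑ m ∈ q.support, monomial m (c ^ m.degree * algebraMap R A (q.coeff m))

theorem coeff_scaleVars (c : A) (q : MvPolynomial σ R) (m : σ →₀ ℕ) :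
    coeff m (q.scaleVars c) = c ^ m.degree * algebraMap R A (q.coeff m) := by
  classical
  rw [scaleVars, coeff_sum]
  simp only [coeff_monomial, Finset.sum_ite_eq', mem_support_iff, ite_not]
  split_ifs with h <;> simp [h]

theorem eval_scaleVars (c : A) (q : MvPolynomial σ R) (y : σ → A) :
    eval y (q.scaleVars c) = aeval (fun i => y i * c) q := by
  rw [scaleVars, map_sum, aeval_def, eval₂_eq]
  refine Finset.sum_congr rfl fun m _ => ?_
  rw [eval_monomial, Finsupp.prod, Finsupp.degree_apply, ← Finset.prod_pow_eq_pow_sum]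
  simp only [mul_pow, Finset.prod_mul_distrib]
  ring

theorem totalDegree_scaleVars_le (c : A) (q : MvPolynomial σ R) :
    (q.scaleVars c).totalDegree ≤ q.totalDegree :=
  Finset.sup_mono fun m hm => by
    rw [mem_support_iff, coeff_scaleVars] at hm
    rw [mem_support_iff]
    exact fun h => hm (by simp [h])

end scaleVars

theorem scaleVars_ne_zero [Field R] [CommRing A] [IsDomain A] [Algebra R A] {c : A} (hc : c ≠ 0)
    {q : MvPolynomial σ R} (hq : q ≠ 0) : q.scaleVars c ≠ 0 := by
  obtain ⟨m, hm⟩ := ne_zero_iff.mp hq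
  refine ne_zero_iff.mpr ⟨m, ?_⟩
  rw [coeff_scaleVars]
  exact mul_ne_zero (pow_ne_zero _ hc) ((map_ne_zero _).mpr hm)

theorem conj_aeval_ofReal_mul_I (q : MvPolynomial σ ℝ) (x : σ → ℝ) :
    conj (aeval (fun i => (x i : ℂ) * Complex.I) q) =
      aeval (fun i => ((-x) i : ℂ) * Complex.I) q := by
  rw [← Complex.conjAe_coe, ← AlgEquiv.coe_toAlgHom, comp_aeval_apply]
  simp

theorem measure_eval_ofReal_ne_zero_pos {μ : Measure (σ → ℝ)} {l : ℕ}
    (hnd : ∀ q : MvPolynomial σ ℝ, q ≠ 0 → q.totalDegree ≤ l → 0 < μ {x | eval x q ≠ 0})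
    {Q : MvPolynomial σ ℂ} (hQ : Q ≠ 0) (hdeg : Q.totalDegree ≤ l) :
    0 < μ {x | eval (fun i => (x i : ℂ)) Q ≠ 0} := by
  have hsub (x : σ → ℝ) : eval x Q.rePart ≠ 0 ∨ eval x Q.imPart ≠ 0 →
      eval (fun i => (x i : ℂ)) Q ≠ 0 := by
    simp [eval_ofReal, Complex.ext_iff, or_iff_not_imp_left]
  rcases rePart_ne_zero_or_imPart_ne_zero hQ with h | h
  · exact (hnd _ h ((totalDegree_rePart_le Q).trans hdeg)).trans_le
      (measure_mono fun x hx => hsub x (.inl hx))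
  · exact (hnd _ h ((totalDegree_imPart_le Q).trans hdeg)).trans_le
      (measure_mono fun x hx => hsub x (.inr hx))

end MvPolynomial

theorem Continuous.integrable_of_measure_compl_eq_zero {X E : Type*} [TopologicalSpace X]
    [T2Space X] [MeasurableSpace X] [OpensMeasurableSpace X] [NormedAddCommGroup E]
    {μ : Measure X} [IsFiniteMeasureOnCompacts μ] {K : Set X} (hK : IsCompact K)
    (hμK : μ Kᶜ = 0) {f : X → E} (hf : Continuous f) : Integrable f μ := by
  rw [← Measure.restrict_eq_self_of_ae_mem (ae_iff.mpr hμK)]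
  exact hf.continuousOn.integrableOn_compact hK

section NegInvariant

variable {X : Type*} [MeasurableSpace X] [AddGroup X] [MeasurableNeg X] {μ : Measure X}
  [μ.IsNegInvariant] {f g : X → ℂ}

theorem integral_mul_conj_comm_of_neg_eq_conj (hf : ∀ x, f (-x) = conj (f x))
    (hg : ∀ x, g (-x) = conj (g x)) :
    ∫ x, f x * conj (g x) ∂μ = ∫ x, g x * conj (f x) ∂μ := by
  rw [← integral_neg_eq_self]
  simp only [hf, hg, Complex.conj_conj, mul_comm]

theorem im_integral_mul_conj_eq_zero_of_neg_eq_conj (hf : ∀ x, f (-x) = conj (f x))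
    (hg : ∀ x, g (-x) = conj (g x)) : (∫ x, f x * conj (g x) ∂μ).im = 0 := by
  rw [← Complex.conj_eq_iff_im, ← integral_conj]
  simp only [map_mul, Complex.conj_conj, mul_comm (conj (f _))]
  exact (integral_mul_conj_comm_of_neg_eq_conj hf hg).symm

end NegInvariant

theorem re_integral_mul_conj_pos {X : Type*} [MeasurableSpace X] {μ : Measure X} {f : X → ℂ}
    (hfi : Integrable (fun x => f x * conj (f x)) μ) (hf : 0 < μ (Function.support f)) :
    0 < (∫ x, f x * conj (f x) ∂μ).re := by
  simp only [Complex.mul_conj] at hfi ⊢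
  rw [integral_complex_ofReal, Complex.ofReal_re]
  refine (integral_pos_iff_support_of_nonneg (fun x => Complex.normSq_nonneg _) ?_).mpr ?_
  · simpa using hfi.re
  · simpa [Function.support] using hf

theorem stmt6_general (n l : ℕ) (μ : Measure (Fin n → ℝ))
    [IsFiniteMeasure μ]
    (hcpt : ∃ K : Set (Fin n → ℝ), IsCompact K ∧ μ Kᶜ = 0)
    (hsymm : Measure.map (fun ξ => -ξ) μ = μ)
    (hnd : ∀ q : MvPolynomial (Fin n) ℝ, q ≠ 0 → q.totalDegree ≤ l →
      0 < μ {ξ | MvPolynomial.eval ξ q ≠ 0}) :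
    ∀ κ : MvPolynomial (Fin n) ℝ → MvPolynomial (Fin n) ℝ → ℂ,
    (κ = fun q₁ q₂ =>
      (((μ Set.univ).toReal)⁻¹ : ℝ) •
        ∫ ξ, (MvPolynomial.aeval (fun i => (ξ i : ℂ) * Complex.I) q₁) *
          (starRingEnd ℂ) (MvPolynomial.aeval (fun i => (ξ i : ℂ) * Complex.I) q₂) ∂μ) →
    -- κ takes only real values and is symmetric
    (∀ q₁ q₂ : MvPolynomial (Fin n) ℝ, q₁.totalDegree ≤ l → q₂.totalDegree ≤ l →
        (κ q₁ q₂).im = 0 ∧ κ q₁ q₂ = κ q₂ q₁) ∧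
    -- κ is bilinear (additive and ℝ-homogeneous in the first variable)
    (∀ q₁ q₂ q₃ : MvPolynomial (Fin n) ℝ, q₁.totalDegree ≤ l → q₂.totalDegree ≤ l →
        q₃.totalDegree ≤ l → κ (q₁ + q₂) q₃ = κ q₁ q₃ + κ q₂ q₃) ∧
    (∀ (r : ℝ) (q₁ q₂ : MvPolynomial (Fin n) ℝ), q₁.totalDegree ≤ l →
        q₂.totalDegree ≤ l → κ (r • q₁) q₂ = r • κ q₁ q₂) ∧
    -- κ is positive definite
    (∀ q : MvPolynomial (Fin n) ℝ, q ≠ 0 → q.totalDegree ≤ l → 0 < (κ q q).re) := by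
  obtain ⟨K, hK, hμK⟩ := hcpt
  have : μ.IsNegInvariant := ⟨hsymm⟩
  rintro κ rfl
  set f : MvPolynomial (Fin n) ℝ → (Fin n → ℝ) → ℂ :=
    fun q ξ => aeval (fun i => (ξ i : ℂ) * Complex.I) q
  have hf_scaleVars (q : MvPolynomial (Fin n) ℝ) :
      f q = fun ξ => eval (fun i => (ξ i : ℂ)) (q.scaleVars Complex.I) :=
    funext fun ξ => (eval_scaleVars Complex.I q fun i => (ξ i : ℂ)).symm
  have hf_neg (q : MvPolynomial (Fin n) ℝ) (ξ : Fin n → ℝ) : f q (-ξ) = conj (f q ξ) :=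
    (conj_aeval_ofReal_mul_I q ξ).symm
  have hf_cont (q : MvPolynomial (Fin n) ℝ) : Continuous (f q) := by
    rw [hf_scaleVars]
    exact (continuous_eval _).comp (continuous_pi fun i => by fun_prop)
  have hint (q₁ q₂ : MvPolynomial (Fin n) ℝ) :
      Integrable (fun ξ => f q₁ ξ * conj (f q₂ ξ)) μ :=
    Continuous.integrable_of_measure_compl_eq_zero hK hμK <|
      (hf_cont q₁).mul (Complex.continuous_conj.comp (hf_cont q₂))
  refine ⟨fun q₁ q₂ _ _ => ⟨?_, ?_⟩, fun q₁ q₂ q₃ _ _ _ => ?_, fun r q₁ q₂ _ _ => ?_,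
    fun q hq hdeg => ?_⟩ <;> dsimp only
  · rw [Complex.smul_im, im_integral_mul_conj_eq_zero_of_neg_eq_conj (hf_neg q₁) (hf_neg q₂),
      smul_zero]
  · rw [integral_mul_conj_comm_of_neg_eq_conj (hf_neg q₁) (hf_neg q₂)]
  · simp only [map_add, add_mul]
    rw [integral_add (hint q₁ q₃) (hint q₂ q₃), smul_add]
  · simp only [map_smul, smul_mul_assoc]
    rw [integral_smul, smul_comm]
  · have hsupp : 0 < μ (Function.support (f q)) := by
      rw [hf_scaleVars]
      exact measure_eval_ofReal_ne_zero_pos hnd (scaleVars_ne_zero Complex.I_ne_zero hq)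
        ((totalDegree_scaleVars_le _ _).trans hdeg)
    have hμ : 0 < (μ Set.univ).toReal :=
      ENNReal.toReal_pos (hsupp.trans_le (measure_mono (Set.subset_univ _))).ne'
        (measure_ne_top _ _)
    rw [Complex.smul_re]
    exact mul_pos (inv_pos.mpr hμ) (re_integral_mul_conj_pos (hint q q) hsupp)

/-- If `μ` is a finite compactly supported measure on `ℝⁿ` of positive total mass,
invariant under `ξ ↦ -ξ` and not supported on a degree-`l` algebraic hypersurface, then
`κ(q₁, q₂) = μ(ℝⁿ)⁻¹ ∫ q₁(iξ) conj(q₂(iξ)) dμ(ξ)` is real valued and defines an inner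
product (a symmetric positive definite real bilinear form) on the real polynomials of
total degree at most `l`. -/
theorem stmt6 (n l : ℕ) (hn : 1 ≤ n) (μ : Measure (Fin n → ℝ))
    [IsFiniteMeasure μ]
    (hpos : 0 < μ Set.univ)
    (hcpt : ∃ K : Set (Fin n → ℝ), IsCompact K ∧ μ Kᶜ = 0)
    (hsymm : Measure.map (fun ξ => -ξ) μ = μ)
    (hnd : ∀ q : MvPolynomial (Fin n) ℝ, q ≠ 0 → q.totalDegree ≤ l →
      0 < μ {ξ | MvPolynomial.eval ξ q ≠ 0}) :
    ∀ κ : MvPolynomial (Fin n) ℝ → MvPolynomial (Fin n) ℝ → ℂ,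
    (κ = fun q₁ q₂ =>
      (((μ Set.univ).toReal)⁻¹ : ℝ) •
        ∫ ξ, (MvPolynomial.aeval (fun i => (ξ i : ℂ) * Complex.I) q₁) *
          (starRingEnd ℂ) (MvPolynomial.aeval (fun i => (ξ i : ℂ) * Complex.I) q₂) ∂μ) →
    -- κ takes only real values and is symmetric
    (∀ q₁ q₂ : MvPolynomial (Fin n) ℝ, q₁.totalDegree ≤ l → q₂.totalDegree ≤ l →
        (κ q₁ q₂).im = 0 ∧ κ q₁ q₂ = κ q₂ q₁) ∧
    -- κ is bilinear (additive and ℝ-homogeneous in the first variable)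
    (∀ q₁ q₂ q₃ : MvPolynomial (Fin n) ℝ, q₁.totalDegree ≤ l → q₂.totalDegree ≤ l →
        q₃.totalDegree ≤ l → κ (q₁ + q₂) q₃ = κ q₁ q₃ + κ q₂ q₃) ∧
    (∀ (r : ℝ) (q₁ q₂ : MvPolynomial (Fin n) ℝ), q₁.totalDegree ≤ l →
        q₂.totalDegree ≤ l → κ (r • q₁) q₂ = r • κ q₁ q₂) ∧
    -- κ is positive definite
    (∀ q : MvPolynomial (Fin n) ℝ, q ≠ 0 → q.totalDegree ≤ l → 0 < (κ q q).re) :=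
  stmt6_general n l μ hcpt hsymm hnd
end

section
/- Let n ≥ 1 and 1 ≤ m ≤ n be integers, and let A, B be real symmetric m × m matrices. For ξ ∈ ℝ^n set q_A(ξ) = Σ_{i,j=1}^m A_{ij} ξ_i ξ_j (and similarly q_B). Then ∫_{B^n} q_A(ξ) q_B(ξ) dξ − (1/Vol(B^n)) (∫_{B^n} q_A(ξ) dξ)(∫_{B^n} q_B(ξ) dξ) = (2 Vol(B^n)/((n + 2)(n + 4))) · (Tr(AB) − Tr(A) Tr(B)/(n + 2)), where B^n = {ξ ∈ ℝ^n : ‖ξ‖ ≤ 1} is the closed unit ball for the standard Euclidean norm, the integrals are with respect to the Lebesgue measure on ℝ^n, and Vol(B^n) = ∫_{B^n} dξ. -/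
/-!
All integrals reduce to the second and fourth moments of the coordinates on the unit ball,
which follow from three symmetries of the ball and its radial integrals
`∫_B ‖x‖ᵏ = n Vol(B) / (n + k)`. Coordinate sign flips kill every monomial in which some
coordinate occurs to an odd power. The reflection in `(e_a + 2 e_b)ᗮ`, which sends `x_a` to
`(3 x_a - 4 x_b) / 5`, gives `∫ x_a⁴ = 3 ∫ x_a² x_b²`, and coordinate permutations make these
moments independent of the indices. The radial integrals for `k = 2, 4` then give
`∫ x_i x_j = Vol / (n + 2) δᵢⱼ` and
`∫ x_i x_j x_k x_l = Vol / ((n + 2) (n + 4)) (δᵢⱼ δₖₗ + δᵢₖ δⱼₗ + δᵢₗ δⱼₖ)`,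
and contracting these tensors with `A` and `B` gives the identity.
-/

open MeasureTheory Matrix Metric Set

theorem setIntegral_closedBall_norm_pow {E : Type*} [NormedAddCommGroup E] [NormedSpace ℝ E]
    [Nontrivial E] [FiniteDimensional ℝ E] [MeasurableSpace E] [BorelSpace E]
    (μ : Measure E) [μ.IsAddHaarMeasure] (k : ℕ) :
    ∫ x in closedBall (0 : E) 1, ‖x‖ ^ k ∂μ =
      Module.finrank ℝ E * μ.real (closedBall 0 1) / (Module.finrank ℝ E + k) := by
  set d := Module.finrank ℝ E
  have hd : 1 ≤ d := Module.finrank_pos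
  have hind : (closedBall (0 : E) 1).indicator (fun x => ‖x‖ ^ k) =
      fun x => (Iic (1 : ℝ)).indicator (fun r => r ^ k) ‖x‖ := by
    ext x
    simp [indicator, mem_closedBall]
  have hprofile : ∫ y in Ioi (0 : ℝ), y ^ (d - 1) • (Iic (1 : ℝ)).indicator (fun r => r ^ k) y =
      1 / (d + k) := by
    have hpow : (fun y : ℝ => y ^ (d - 1) • (Iic (1 : ℝ)).indicator (fun r => r ^ k) y) =
        (Iic (1 : ℝ)).indicator fun y => y ^ (d + k - 1) := by
      ext y
      by_cases hy : y ≤ 1 <;> simp [hy, ← pow_add, Nat.sub_add_comm hd]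
    rw [hpow, setIntegral_indicator measurableSet_Iic, Ioi_inter_Iic,
      ← intervalIntegral.integral_of_le zero_le_one, integral_pow,
      Nat.cast_sub (by omega : 1 ≤ d + k)]
    simp
  rw [← integral_indicator measurableSet_closedBall, hind, integral_fun_norm_addHaar μ, hprofile,
    Measure.addHaar_real_closedBall_eq_addHaar_real_ball, nsmul_eq_mul, smul_eq_mul]
  ring

theorem IsCompact.setIntegral_finset_sum_of_continuous {X ι : Type*} [TopologicalSpace X]
    [MeasurableSpace X] [OpensMeasurableSpace X] {μ : Measure X} [IsLocallyFiniteMeasure μ]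
    {K : Set X} (hK : IsCompact K) (s : Finset ι) {f : ι → X → ℝ} (hf : ∀ i, Continuous (f i)) :
    ∫ x in K, ∑ i ∈ s, f i x ∂μ = ∑ i ∈ s, ∫ x in K, f i x ∂μ :=
  integral_finsetSum s fun i _ => (hf i).locallyIntegrable.integrableOn_isCompact hK

section InnerProductSpace

variable {E : Type*} [NormedAddCommGroup E] [InnerProductSpace ℝ E] [FiniteDimensional ℝ E]
  [MeasurableSpace E] [BorelSpace E]

theorem setIntegral_closedBall_comp_linearIsometryEquiv (f : E ≃ₗᵢ[ℝ] E) (g : E → ℝ) (r : ℝ) :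
    ∫ x in closedBall 0 r, g (f x) = ∫ x in closedBall 0 r, g x := by
  simpa [f.preimage_closedBall] using
    f.measurePreserving.setIntegral_preimage_emb f.toHomeomorph.measurableEmbedding g
      (closedBall 0 r)

theorem setIntegral_closedBall_eq_zero_of_comp_eq_neg (f : E ≃ₗᵢ[ℝ] E) {g : E → ℝ}
    (hg : ∀ x, g (f x) = -g x) (r : ℝ) : ∫ x in closedBall 0 r, g x = 0 := by
  have h := setIntegral_closedBall_comp_linearIsometryEquiv f g r
  simp only [hg, integral_neg] at h
  linarith

end InnerProductSpace

section EuclideanSpace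

variable {ι : Type*} [Fintype ι]

theorem setIntegral_closedBall_comp_perm (σ : Equiv.Perm ι) (g : (ι → ℝ) → ℝ) (r : ℝ) :
    ∫ x : EuclideanSpace ℝ ι in closedBall 0 r, g (fun k => x (σ k)) =
      ∫ x : EuclideanSpace ℝ ι in closedBall 0 r, g x :=
  setIntegral_closedBall_comp_linearIsometryEquiv
    (LinearIsometryEquiv.piLpCongrLeft 2 ℝ ℝ σ.symm) (fun x => g x) r

theorem reflection_orthogonal_singleton_apply (u x : EuclideanSpace ℝ ι) (k : ι) :
    (ℝ ∙ u)ᗮ.reflection x k = x k - 2 * (inner ℝ u x / ‖u‖ ^ 2) * u k := by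
  rw [Submodule.reflection_orthogonal_apply, Submodule.reflection_singleton_apply]
  simp
  ring

variable [DecidableEq ι]

noncomputable def coordFlip (a : ι) : EuclideanSpace ℝ ι ≃ₗᵢ[ℝ] EuclideanSpace ℝ ι :=
  (ℝ ∙ EuclideanSpace.single a (1 : ℝ))ᗮ.reflection

@[simp]
theorem coordFlip_apply (a k : ι) (x : EuclideanSpace ℝ ι) :
    coordFlip a x k = if k = a then -x k else x k := by
  rw [coordFlip, reflection_orthogonal_singleton_apply]
  by_cases h : k = a <;> simp [h, EuclideanSpace.inner_single_left]
  ring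

theorem setIntegral_closedBall_coord_pow_four_eq_three_mul {a b : ι} (hab : a ≠ b) :
    ∫ x : EuclideanSpace ℝ ι in closedBall 0 1, x a ^ 4 =
      3 * ∫ x : EuclideanSpace ℝ ι in closedBall 0 1, x a ^ 2 * x b ^ 2 := by
  set u : EuclideanSpace ℝ ι := EuclideanSpace.single a 1 + (2 : ℝ) • EuclideanSpace.single b 1
  have hu : ‖u‖ ^ 2 = 5 := by
    rw [EuclideanSpace.real_norm_sq_eq, ← Finset.add_sum_erase _ _ (Finset.mem_univ a),
      ← Finset.add_sum_erase _ _ (Finset.mem_erase.2 ⟨hab.symm, Finset.mem_univ b⟩),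
      Finset.sum_eq_zero]
    · simp [u, hab, hab.symm]
      norm_num
    · intro k hk
      simp only [Finset.mem_erase] at hk
      simp [u, hk.1, hk.2.1]
  have hreflect : ∀ x : EuclideanSpace ℝ ι, (ℝ ∙ u)ᗮ.reflection x a = (3 * x a - 4 * x b) / 5 := by
    intro x
    rw [reflection_orthogonal_singleton_apply, hu]
    simp [u, hab, inner_add_left, inner_smul_left, EuclideanSpace.inner_single_left]
    ring
  have hexpand : ∀ x : EuclideanSpace ℝ ι, ((3 * x a - 4 * x b) / 5) ^ 4 =
      81 / 625 * x a ^ 4 + 864 / 625 * (x a ^ 2 * x b ^ 2) + 256 / 625 * x b ^ 4 -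
        (432 / 625 * (x a ^ 3 * x b) + 768 / 625 * (x a * x b ^ 3)) :=
    fun x => by ring
  have hodd_b : ∫ x : EuclideanSpace ℝ ι in closedBall 0 1, x a ^ 3 * x b = 0 :=
    setIntegral_closedBall_eq_zero_of_comp_eq_neg (coordFlip b) (fun x => by simp [hab]) 1
  have hodd_a : ∫ x : EuclideanSpace ℝ ι in closedBall 0 1, x a * x b ^ 3 = 0 :=
    setIntegral_closedBall_eq_zero_of_comp_eq_neg (coordFlip a) (fun x => by simp [hab.symm]) 1
  have hswap : ∫ x : EuclideanSpace ℝ ι in closedBall 0 1, x b ^ 4 =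
      ∫ x : EuclideanSpace ℝ ι in closedBall 0 1, x a ^ 4 := by
    simpa using setIntegral_closedBall_comp_perm (Equiv.swap a b) (fun y => y a ^ 4) 1
  have key := setIntegral_closedBall_comp_linearIsometryEquiv (ℝ ∙ u)ᗮ.reflection
    (fun x => x a ^ 4) 1
  simp only [hreflect, hexpand] at key
  rw [integral_sub, integral_add, integral_add, integral_add, integral_const_mul,
    integral_const_mul, integral_const_mul, integral_const_mul, integral_const_mul,
    hodd_a, hodd_b, hswap] at key
  · linarith
  all_goals
    refine (Continuous.locallyIntegrable ?_).integrableOn_isCompact (isCompact_closedBall _ _)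
    fun_prop

end EuclideanSpace

local notation "ℝ^" n:max => EuclideanSpace ℝ (Fin n)

variable {n : ℕ}

local notation "V" => volume.real (closedBall (0 : ℝ^n) 1)

variable (n) in
theorem setIntegral_closedBall_norm_pow_euclideanSpace [NeZero n] (k : ℕ) :
    ∫ x : ℝ^n in closedBall 0 1, ‖x‖ ^ k = n * V / (n + k) := by
  simpa using setIntegral_closedBall_norm_pow (volume : Measure (ℝ^n)) k

theorem setIntegral_closedBall_coord_mul_coord (i j : Fin n) :
    ∫ x : ℝ^n in closedBall 0 1, x i * x j = V / (n + 2) * if i = j then 1 else 0 := by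
  rcases eq_or_ne i j with rfl | hij
  · have : NeZero n := ⟨i.pos.ne'⟩
    have hswap : ∀ k, ∫ x : ℝ^n in closedBall 0 1, x k ^ 2 =
        ∫ x : ℝ^n in closedBall 0 1, x i ^ 2 :=
      fun k => by simpa using setIntegral_closedBall_comp_perm (Equiv.swap i k) (fun y => y i ^ 2) 1
    have hrad := setIntegral_closedBall_norm_pow_euclideanSpace n 2
    simp (disch := (intros; fun_prop)) only [EuclideanSpace.real_norm_sq_eq,
      IsCompact.setIntegral_finset_sum_of_continuous (isCompact_closedBall _ _)] at hrad
    simp only [hswap, Finset.sum_const, Finset.card_univ, Fintype.card_fin, nsmul_eq_mul] at hrad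
    have hn : (n : ℝ) ≠ 0 := NeZero.ne _
    simp only [if_true, mul_one, ← pow_two]
    push_cast at hrad
    field_simp at hrad ⊢
    exact hrad
  · rw [if_neg hij, mul_zero]
    exact setIntegral_closedBall_eq_zero_of_comp_eq_neg (coordFlip i)
      (fun x => by simp [hij.symm]) 1

theorem setIntegral_closedBall_coord_pow_four (a : Fin n) :
    ∫ x : ℝ^n in closedBall 0 1, x a ^ 4 = 3 * (V / ((n + 2) * (n + 4))) := by
  have : NeZero n := ⟨a.pos.ne'⟩
  set p := ∫ x : ℝ^n in closedBall 0 1, x a ^ 4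
  have hswap : ∀ c, ∫ x : ℝ^n in closedBall 0 1, x c ^ 4 = p :=
    fun c => by simpa using setIntegral_closedBall_comp_perm (Equiv.swap a c) (fun y => y a ^ 4) 1
  have hpair : ∀ c d, ∫ x : ℝ^n in closedBall 0 1, x c ^ 2 * x d ^ 2 =
      (1 + 2 * if c = d then 1 else 0) / 3 * p := by
    intro c d
    rcases eq_or_ne c d with rfl | hcd
    · simp_rw [← pow_add, hswap]
      norm_num
    · rw [if_neg hcd, ← hswap c, setIntegral_closedBall_coord_pow_four_eq_three_mul hcd]
      ring
  have hrad := setIntegral_closedBall_norm_pow_euclideanSpace n 4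
  simp_rw [show ∀ x : ℝ^n, ‖x‖ ^ 4 = ∑ c, ∑ d, x c ^ 2 * x d ^ 2 from fun x => by
    rw [show 4 = 2 * 2 from rfl, pow_mul, EuclideanSpace.real_norm_sq_eq, sq,
      Finset.sum_mul_sum]] at hrad
  simp (disch := (intros; fun_prop)) only
    [IsCompact.setIntegral_finset_sum_of_continuous (isCompact_closedBall _ _)] at hrad
  simp only [hpair, ← Finset.sum_mul, ← Finset.sum_div, Finset.sum_add_distrib, ← Finset.mul_sum,
    Finset.sum_ite_eq, Finset.mem_univ, if_true, Finset.sum_const, Finset.card_univ,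
    Fintype.card_fin, nsmul_eq_mul] at hrad
  have hn : (n : ℝ) ≠ 0 := NeZero.ne _
  push_cast at hrad
  field_simp at hrad ⊢
  linarith

theorem setIntegral_closedBall_sq_mul_sq {a b : Fin n} (hab : a ≠ b) :
    ∫ x : ℝ^n in closedBall 0 1, x a ^ 2 * x b ^ 2 = V / ((n + 2) * (n + 4)) := by
  have h := setIntegral_closedBall_coord_pow_four_eq_three_mul hab
  rw [setIntegral_closedBall_coord_pow_four] at h
  linarith

theorem setIntegral_closedBall_coord_mul_coord_mul_coord_mul_coord (i j k l : Fin n) :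
    ∫ x : ℝ^n in closedBall 0 1, x i * x j * (x k * x l) =
      V / ((n + 2) * (n + 4)) *
        ((if i = j then 1 else 0) * (if k = l then 1 else 0) +
          (if i = k then 1 else 0) * (if j = l then 1 else 0) +
          (if i = l then 1 else 0) * (if j = k then 1 else 0)) := by
  have vanish : ∀ a, (∀ x : ℝ^n, coordFlip a x i * coordFlip a x j *
      (coordFlip a x k * coordFlip a x l) = -(x i * x j * (x k * x l))) →
      ∫ x : ℝ^n in closedBall 0 1, x i * x j * (x k * x l) = 0 :=
    fun a h => setIntegral_closedBall_eq_zero_of_comp_eq_neg (coordFlip a) h 1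
  rcases eq_or_ne i j with rfl | hij
  · rcases eq_or_ne k l with rfl | hkl
    · rcases eq_or_ne i k with rfl | hik
      · rw [show (fun x : ℝ^n => x i * x i * (x i * x i)) = fun x => x i ^ 4 by ext; ring,
          setIntegral_closedBall_coord_pow_four]
        norm_num
        ring
      · rw [show (fun x : ℝ^n => x i * x i * (x k * x k)) = fun x => x i ^ 2 * x k ^ 2 by
          ext; ring, setIntegral_closedBall_sq_mul_sq hik]
        simp [hik]
    · rcases eq_or_ne i l with rfl | hil
      · rw [vanish k fun x => by simp [hkl.symm]]
        simp [hkl, hkl.symm]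
      · rw [vanish l fun x => by simp [hkl, hil]]
        simp [hkl, hil]
  · rcases eq_or_ne i k with rfl | hik
    · rcases eq_or_ne j l with rfl | hjl
      · rw [show (fun x : ℝ^n => x i * x j * (x i * x j)) = fun x => x i ^ 2 * x j ^ 2 by
          ext; ring, setIntegral_closedBall_sq_mul_sq hij]
        simp [hij, hij.symm]
      · rw [vanish j fun x => by simp [hij, hjl.symm]]
        simp [hij, hij.symm, hjl]
    · rcases eq_or_ne i l with rfl | hil
      · rcases eq_or_ne j k with rfl | hjk
        · rw [show (fun x : ℝ^n => x i * x j * (x j * x i)) = fun x => x i ^ 2 * x j ^ 2 by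
            ext; ring, setIntegral_closedBall_sq_mul_sq hij]
          simp [hij, hij.symm]
        · rw [vanish j fun x => by simp [hij, hjk.symm]]
          simp [hij, hij.symm, hik, hik.symm, hjk]
      · rw [vanish i fun x => by simp [hij.symm, hik.symm, hil.symm]]
        simp [hij, hik, hil]

theorem setIntegral_closedBall_quadForm {ι : Type*} [Fintype ι] {e : ι → Fin n}
    (he : Function.Injective e) (A : Matrix ι ι ℝ) :
    ∫ x : ℝ^n in closedBall 0 1, ∑ i, ∑ j, A i j * (x (e i) * x (e j)) =
      V / (n + 2) * A.trace := by
  classical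
  simp (disch := (intros; fun_prop)) only
    [IsCompact.setIntegral_finset_sum_of_continuous (isCompact_closedBall _ _),
      integral_const_mul, setIntegral_closedBall_coord_mul_coord, he.eq_iff]
  simp [Matrix.trace, Finset.sum_mul, mul_comm]

theorem setIntegral_closedBall_quadForm_mul_quadForm {ι : Type*} [Fintype ι] {e : ι → Fin n}
    (he : Function.Injective e) (A B : Matrix ι ι ℝ) (hB : B.IsSymm) :
    ∫ x : ℝ^n in closedBall 0 1, (∑ i, ∑ j, A i j * (x (e i) * x (e j))) *
        (∑ k, ∑ l, B k l * (x (e k) * x (e l))) =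
      V / ((n + 2) * (n + 4)) * (A.trace * B.trace + 2 * (A * B).trace) := by
  classical
  simp only [Finset.sum_mul, Finset.mul_sum, mul_mul_mul_comm (A _ _)]
  simp (disch := (intros; fun_prop)) only
    [IsCompact.setIntegral_finset_sum_of_continuous (isCompact_closedBall _ _),
      integral_const_mul, setIntegral_closedBall_coord_mul_coord_mul_coord_mul_coord, he.eq_iff]
  simp only [mul_add, mul_ite, mul_one, mul_zero, Finset.sum_add_distrib, Finset.sum_ite_eq,
    Finset.sum_ite_eq', Finset.mem_univ, if_true, Finset.sum_ite_irrel, Finset.sum_const_zero,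
    ← Finset.sum_mul]
  have htrace : ∑ k, (∑ i, A i i) * B k k = A.trace * B.trace := (Finset.mul_sum _ _ _).symm
  have hsymm : ∑ k, ∑ l, A k l * B k l = (A * B).trace := by
    simp [Matrix.trace, Matrix.mul_apply, hB.apply]
  have hmul : ∑ k, ∑ l, A l k * B k l = (A * B).trace := by
    rw [Finset.sum_comm]
    simp [Matrix.trace, Matrix.mul_apply]
  rw [htrace, hsymm, hmul]
  ring

theorem stmt13_general (n m : ℕ) (hmn : m ≤ n)
    (A B : Matrix (Fin m) (Fin m) ℝ) (hB : B.IsSymm) :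
    (∫ ξ : EuclideanSpace ℝ (Fin n) in Metric.closedBall 0 1,
      (∑ i : Fin m, ∑ j : Fin m, A i j * (ξ (Fin.castLE hmn i) * ξ (Fin.castLE hmn j))) *
      (∑ i : Fin m, ∑ j : Fin m, B i j * (ξ (Fin.castLE hmn i) * ξ (Fin.castLE hmn j)))) -
    (1 / (volume (Metric.closedBall (0 : EuclideanSpace ℝ (Fin n)) 1)).toReal) *
      (∫ ξ : EuclideanSpace ℝ (Fin n) in Metric.closedBall 0 1,
        ∑ i : Fin m, ∑ j : Fin m, A i j * (ξ (Fin.castLE hmn i) * ξ (Fin.castLE hmn j))) *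
      (∫ ξ : EuclideanSpace ℝ (Fin n) in Metric.closedBall 0 1,
        ∑ i : Fin m, ∑ j : Fin m, B i j * (ξ (Fin.castLE hmn i) * ξ (Fin.castLE hmn j))) =
    2 * (volume (Metric.closedBall (0 : EuclideanSpace ℝ (Fin n)) 1)).toReal /
        ((n + 2) * (n + 4)) *
      ((A * B).trace - A.trace * B.trace / (n + 2)) := by
  have he := Fin.castLE_injective hmn
  rw [setIntegral_closedBall_quadForm_mul_quadForm he A B hB, setIntegral_closedBall_quadForm he,
    setIntegral_closedBall_quadForm he, ← measureReal_def]
  have hV : volume.real (closedBall (0 : ℝ^n) 1) ≠ 0 :=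
    (ENNReal.toReal_pos (measure_closedBall_pos _ _ one_pos).ne' measure_closedBall_lt_top.ne).ne'
  field_simp
  ring

/-- Covariance identity for quadratic forms on the unit ball: for symmetric `m × m`
matrices `A, B` with `m ≤ n` and `q_A(ξ) = ∑ᵢⱼ Aᵢⱼ ξᵢ ξⱼ`,
`∫ q_A q_B − Vol⁻¹ (∫ q_A)(∫ q_B) = (2 Vol/((n+2)(n+4))) (Tr(AB) − Tr(A)Tr(B)/(n+2))`. -/
theorem stmt13 (n m : ℕ) (hn : 1 ≤ n) (hm : 1 ≤ m) (hmn : m ≤ n)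
    (A B : Matrix (Fin m) (Fin m) ℝ) (hA : A.IsSymm) (hB : B.IsSymm) :
    (∫ ξ : EuclideanSpace ℝ (Fin n) in Metric.closedBall 0 1,
      (∑ i : Fin m, ∑ j : Fin m, A i j * (ξ (Fin.castLE hmn i) * ξ (Fin.castLE hmn j))) *
      (∑ i : Fin m, ∑ j : Fin m, B i j * (ξ (Fin.castLE hmn i) * ξ (Fin.castLE hmn j)))) -
    (1 / (volume (Metric.closedBall (0 : EuclideanSpace ℝ (Fin n)) 1)).toReal) *
      (∫ ξ : EuclideanSpace ℝ (Fin n) in Metric.closedBall 0 1,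
        ∑ i : Fin m, ∑ j : Fin m, A i j * (ξ (Fin.castLE hmn i) * ξ (Fin.castLE hmn j))) *
      (∫ ξ : EuclideanSpace ℝ (Fin n) in Metric.closedBall 0 1,
        ∑ i : Fin m, ∑ j : Fin m, B i j * (ξ (Fin.castLE hmn i) * ξ (Fin.castLE hmn j))) =
    2 * (volume (Metric.closedBall (0 : EuclideanSpace ℝ (Fin n)) 1)).toReal /
        ((n + 2) * (n + 4)) *
      ((A * B).trace - A.trace * B.trace / (n + 2)) :=
  stmt13_general n m hmn A B hB
end
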